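/- arXiv:1411.4092 — 4 statements merged into one kernel-verified Lean document; each statement's English description precedes it below -/
import Mathlib

section
/- For coprime positive integers a and b, the inversion number inv(a,b) of the permutation x ↦ a·x mod b on {1,...,b} satisfies inv(a,b) = -3·b·s(a,b) + (b-1)(b-2)/4, where s(a,b) is the Dedekind sum. -/
/-!
For `0 < i < j < b` write `r k = a * k % b`. Since `a` is a unit mod `b`, the pair `(i, j)` is an
inversion exactly when `r i + r (j - i) ≥ b`, and as `((a k / b)) = r k / b - 1/2` this indicator is
the cocycle defect `((a i / b)) + ((a (j - i) / b)) - ((a j / b)) + 1/2` of the fractional part.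
Summing over all pairs, each `((a k / b))` appears with coefficient `2 b - 1 - 3 k`; the sum of the
`((a k / b))` vanishes by the symmetry `k ↦ b - k`, leaving `-3 b s(a, b)` plus the constant
`(b - 1) (b - 2) / 4`. The index `b` is never part of an inversion, as `σ_a b = b` is maximal.
-/

/-- The sawtooth function ((x)): 0 if x is an integer, else x - ⌊x⌋ - 1/2. -/
def sawtooth (x : ℚ) : ℚ := if x.den = 1 then 0 else x - ⌊x⌋ - 1/2

/-- The Dedekind sum s(a,b) = ∑_{i=1}^{b-1} (i/b)·((a·i/b)). -/
def dedekindSum (a b : ℕ) : ℚ :=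
  ∑ i ∈ Finset.Icc 1 (b - 1), (i : ℚ) / (b : ℚ) * sawtooth ((a * i : ℕ) / (b : ℚ))

/-- Representative of a·x mod b in {1, ..., b}. -/
def modRep (a b x : ℕ) : ℕ := if a * x % b = 0 then b else a * x % b

/-- inv(a,b): number of pairs 1 ≤ i < j ≤ b with a·i mod b > a·j mod b
(representatives in {1,...,b}). -/
def invNum (a b : ℕ) : ℕ :=
  ((Finset.Icc 1 b ×ˢ Finset.Icc 1 b).filter
    (fun p => p.1 < p.2 ∧ modRep a b p.2 < modRep a b p.1)).card

open Finset

theorem Int.fract_add_fract_sub_fract_add {R : Type*} [CommRing R] [LinearOrder R]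
    [IsStrictOrderedRing R] [FloorRing R] (x y : R) :
    Int.fract x + Int.fract y - Int.fract (x + y) =
      if Int.fract (x + y) < Int.fract x then 1 else 0 := by
  obtain ⟨z, hz⟩ := Int.fract_add x y
  have hz0 : z ≤ 0 := by
    have : (z : R) ≤ 0 := by linarith [Int.fract_add_le x y]
    exact_mod_cast this
  have hz1 : -1 ≤ z := by
    have : (-1 : R) ≤ z := by linarith [Int.fract_add_fract_le x y]
    exact_mod_cast this
  obtain rfl | rfl : z = 0 ∨ z = -1 := by omega
  · push_cast at hz
    rw [if_neg (by linarith [Int.fract_nonneg y])]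
    linarith
  · push_cast at hz
    rw [if_pos (by linarith [Int.fract_lt_one y])]
    linarith

theorem sawtooth_eq_ite_fract (x : ℚ) :
    sawtooth x = if Int.fract x = 0 then 0 else Int.fract x - 1 / 2 := by
  have hden : x.den = 1 ↔ Int.fract x = 0 := by
    rw [Int.fract_eq_zero_iff, Rat.den_eq_one_iff]
    refine ⟨fun h => ⟨x.num, h⟩, ?_⟩
    rintro ⟨z, rfl⟩
    simp
  simp only [sawtooth, hden, Int.self_sub_floor]

theorem sawtooth_neg (x : ℚ) : sawtooth (-x) = -sawtooth x := by
  by_cases h : Int.fract x = 0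
  · simp [sawtooth_eq_ite_fract, h]
  · rw [sawtooth_eq_ite_fract, sawtooth_eq_ite_fract, if_neg h,
      if_neg (by rwa [Int.fract_neg_eq_zero]), Int.fract_neg h]
    ring

theorem sawtooth_add_intCast (x : ℚ) (z : ℤ) : sawtooth (x + z) = sawtooth x := by
  simp only [sawtooth_eq_ite_fract, Int.fract_add_intCast]

theorem sawtooth_natCast_div_of_not_dvd {n b : ℕ} (hb : 0 < b) (h : ¬ b ∣ n) :
    sawtooth ((n : ℚ) / b) = Int.fract ((n : ℚ) / b) - 1 / 2 := by
  rw [sawtooth, if_neg (by rwa [Rat.den_div_natCast_eq_one_iff _ _ hb.ne']), Int.self_sub_floor]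

theorem sum_sawtooth_mul_div_eq_zero (a b : ℕ) :
    ∑ k ∈ Icc 1 (b - 1), sawtooth ((a * k : ℕ) / (b : ℚ)) = 0 := by
  obtain rfl | hb := b.eq_zero_or_pos
  · simp
  have hreflect : ∀ k ∈ Icc 1 (b - 1),
      sawtooth ((a * (b - k) : ℕ) / (b : ℚ)) = -sawtooth ((a * k : ℕ) / (b : ℚ)) := by
    intro k hk
    have hkb : k ≤ b := by grind
    rw [← sawtooth_neg, ← sawtooth_add_intCast _ (-a)]
    congr 1
    push_cast [Nat.cast_sub hkb]
    field_simp
    ring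
  have hmem : ∀ k ∈ Icc 1 (b - 1), b - k ∈ Icc 1 (b - 1) := fun k hk => by
    simp only [mem_Icc] at hk ⊢; omega
  have hinv : ∀ k ∈ Icc 1 (b - 1), b - (b - k) = k := fun k hk => by
    simp only [mem_Icc] at hk; omega
  have := sum_nbij' (s := Icc 1 (b - 1)) (t := Icc 1 (b - 1)) (b - ·) (b - ·) hmem hmem hinv hinv
    (f := fun k => -sawtooth ((a * k : ℕ) / (b : ℚ)))
    (g := fun k => sawtooth ((a * k : ℕ) / (b : ℚ))) (fun k hk => (hreflect k hk).symm)
  rw [sum_neg_distrib] at this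
  linarith

theorem natCast_mul_dedekindSum (a b : ℕ) :
    b * dedekindSum a b = ∑ k ∈ Icc 1 (b - 1), k * sawtooth ((a * k : ℕ) / (b : ℚ)) := by
  obtain rfl | hb := b.eq_zero_or_pos
  · simp
  rw [dedekindSum, mul_sum]
  refine sum_congr rfl fun k _ => ?_
  field_simp

theorem modRep_self (a b : ℕ) : modRep a b b = b := by
  simp [modRep]

theorem modRep_le (a : ℕ) {b : ℕ} (hb : 0 < b) (x : ℕ) : modRep a b x ≤ b := by
  unfold modRep
  split_ifs
  exacts [le_rfl, (Nat.mod_lt _ hb).le]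

theorem modRep_of_not_dvd {a b x : ℕ} (h : ¬ b ∣ a * x) : modRep a b x = a * x % b :=
  if_neg fun h0 => h (Nat.dvd_of_mod_eq_zero h0)

theorem invNum_eq_sum_sum_ite (a : ℕ) {b : ℕ} (hb : 0 < b) :
    (invNum a b : ℚ) = ∑ j ∈ Icc 1 (b - 1), ∑ i ∈ Ico 1 j,
      if modRep a b j < modRep a b i then 1 else 0 := by
  obtain ⟨n, rfl⟩ : ∃ n, b = n + 1 := ⟨b - 1, by omega⟩
  have hlast : ∑ i ∈ Icc 1 (n + 1),
      (if i < n + 1 ∧ modRep a (n + 1) (n + 1) < modRep a (n + 1) i then (1 : ℚ) else 0) = 0 :=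
    sum_eq_zero fun i _ => if_neg fun h =>
      (modRep_le a hb i).not_gt (by simpa only [modRep_self] using h.2)
  rw [invNum, card_filter, Nat.cast_sum, sum_product_right, sum_Icc_succ_top (by omega)]
  push_cast
  rw [hlast, add_zero]
  refine sum_congr rfl fun j hj => ?_
  simp only [ite_and]
  rw [← sum_filter]
  congr 1
  ext i
  simp only [mem_filter, mem_Icc, mem_Ico] at hj ⊢
  omega

theorem not_dvd_mul_of_coprime {a b k : ℕ} (h : a.Coprime b) (hk : 0 < k) (hkb : k < b) :
    ¬ b ∣ a * k :=
  fun hd => (Nat.le_of_dvd hk (h.symm.dvd_mul_left.mp hd)).not_gt hkb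

theorem ite_modRep_lt_eq_sawtooth {a b i j : ℕ} (h : a.Coprime b) (hi : 0 < i) (hij : i < j)
    (hjb : j < b) :
    (if modRep a b j < modRep a b i then 1 else 0 : ℚ) =
      sawtooth ((a * i : ℕ) / (b : ℚ)) + sawtooth ((a * (j - i) : ℕ) / (b : ℚ))
        - sawtooth ((a * j : ℕ) / (b : ℚ)) + 1 / 2 := by
  have hb : 0 < b := by omega
  have hndi := not_dvd_mul_of_coprime h hi (hij.trans hjb)
  have hndj := not_dvd_mul_of_coprime h (hi.trans hij) hjb
  have hndji := not_dvd_mul_of_coprime h (Nat.sub_pos_of_lt hij) (by omega)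
  have hadd : ((a * i : ℕ) : ℚ) / b + ((a * (j - i) : ℕ) : ℚ) / b = ((a * j : ℕ) : ℚ) / b := by
    rw [← add_div]
    push_cast [Nat.cast_sub hij.le]
    ring
  have hlt : modRep a b j < modRep a b i ↔
      Int.fract (((a * j : ℕ) : ℚ) / b) < Int.fract (((a * i : ℕ) : ℚ) / b) := by
    rw [modRep_of_not_dvd hndi, modRep_of_not_dvd hndj,
      Int.fract_div_natCast_eq_div_natCast_mod, Int.fract_div_natCast_eq_div_natCast_mod,
      div_lt_div_iff_of_pos_right (by positivity), Nat.cast_lt]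
  rw [sawtooth_natCast_div_of_not_dvd hb hndi, sawtooth_natCast_div_of_not_dvd hb hndj,
    sawtooth_natCast_div_of_not_dvd hb hndji, if_congr hlt rfl rfl, ← hadd,
    ← Int.fract_add_fract_sub_fract_add]
  ring

theorem sum_Icc_sum_Ico_eq_sum_nsmul {M : Type*} [AddCommMonoid M] (n : ℕ) (f : ℕ → M) :
    ∑ j ∈ Icc 1 n, ∑ i ∈ Ico 1 j, f i = ∑ i ∈ Icc 1 n, (n - i) • f i := by
  rw [sum_comm' (t' := Icc 1 n) (s' := fun i => Ioc i n)
    (fun j i => by simp only [mem_Icc, mem_Ico, mem_Ioc]; omega)]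
  simp only [sum_const, Nat.card_Ioc]

theorem sum_Ico_one_sub_eq {M : Type*} [AddCommMonoid M] (j : ℕ) (f : ℕ → M) :
    ∑ i ∈ Ico 1 j, f (j - i) = ∑ i ∈ Ico 1 j, f i := by
  simpa using sum_Ico_reflect f 1 (m := j) (n := j) (by omega)

theorem sum_Icc_natCast_sub_one (n : ℕ) : ∑ k ∈ Icc 1 n, ((k : ℚ) - 1) = n * (n - 1) / 2 := by
  induction n with
  | zero => simp
  | succ n ih =>
    rw [sum_Icc_succ_top (by omega), ih]
    push_cast
    ring

theorem sum_Icc_sum_Ico_cocycle (n : ℕ) (F : ℕ → ℚ) :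
    ∑ j ∈ Icc 1 n, ∑ i ∈ Ico 1 j, (F i + F (j - i) - F j + 1 / 2) =
      (2 * n + 1) * ∑ k ∈ Icc 1 n, F k - 3 * ∑ k ∈ Icc 1 n, k * F k + n * (n - 1) / 4 := by
  have hinner : ∀ j ∈ Icc 1 n, ∑ i ∈ Ico 1 j, (F i + F (j - i) - F j + 1 / 2) =
      2 * ∑ i ∈ Ico 1 j, F i + ((j : ℚ) - 1) * (1 / 2 - F j) := by
    intro j hj
    rw [sum_add_distrib, sum_sub_distrib, sum_add_distrib, sum_Ico_one_sub_eq, sum_const,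
      sum_const, Nat.card_Ico, nsmul_eq_mul, nsmul_eq_mul, Nat.cast_sub (mem_Icc.mp hj).1]
    push_cast
    ring
  have hconst : (n : ℚ) * (n - 1) / 4 = ∑ k ∈ Icc 1 n, ((k : ℚ) - 1) / 2 := by
    rw [← sum_div, sum_Icc_natCast_sub_one]
    ring
  rw [sum_congr rfl hinner, sum_add_distrib, ← mul_sum, sum_Icc_sum_Ico_eq_sum_nsmul, hconst,
    mul_sum, mul_sum, mul_sum, ← sum_sub_distrib, ← sum_add_distrib, ← sum_add_distrib]
  refine sum_congr rfl fun k hk => ?_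
  rw [nsmul_eq_mul, Nat.cast_sub (mem_Icc.mp hk).2]
  ring

theorem stmt0 (a b : ℕ) (hb : 1 ≤ b) (h : Nat.Coprime a b) :
    (invNum a b : ℚ) = -3 * b * dedekindSum a b + ((b : ℚ) - 1) * ((b : ℚ) - 2) / 4 := by
  have hinv : (invNum a b : ℚ) = ∑ j ∈ Icc 1 (b - 1), ∑ i ∈ Ico 1 j,
      (sawtooth ((a * i : ℕ) / (b : ℚ)) + sawtooth ((a * (j - i) : ℕ) / (b : ℚ))
        - sawtooth ((a * j : ℕ) / (b : ℚ)) + 1 / 2) := by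
    rw [invNum_eq_sum_sum_ite a hb]
    refine sum_congr rfl fun j hj => sum_congr rfl fun i hi => ?_
    simp only [mem_Icc, mem_Ico] at hi hj
    exact ite_modRep_lt_eq_sawtooth h (by omega) hi.2 (by omega)
  rw [hinv, sum_Icc_sum_Ico_cocycle (b - 1) fun k => sawtooth ((a * k : ℕ) / (b : ℚ)),
    sum_sawtooth_mul_div_eq_zero, ← natCast_mul_dedekindSum, Nat.cast_sub hb]
  push_cast
  ring
end

section
/- For an odd integer b ≥ 3, inv(2,b) = (b²-1)/8. -/
/-! Multiplication by 2 modulo `2m+1` maps `1, …, m` to the even numbers `2, …, 2m` and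
`m+1, …, 2m` to the odd numbers `1, …, 2m-1`. Hence `(i, j)` with `i < j` is an inversion
exactly when `i ≤ m < j ≤ m + i`, so `i` starts `i` inversions if `i ≤ m` and none otherwise,
and `inv(2, 2m+1) = 1 + ⋯ + m = m(m+1)/2 = ((2m+1)² - 1)/8`. -/

open Finset

lemma modRep_two_odd {m x : ℕ} (hx₁ : 1 ≤ x) (hx₂ : x ≤ 2 * m + 1) :
    modRep 2 (2 * m + 1) x =
      if x ≤ m then 2 * x else if x ≤ 2 * m then 2 * x - (2 * m + 1) else 2 * m + 1 := by
  unfold modRep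
  rcases (show x ≤ m ∨ m < x ∧ x ≤ 2 * m ∨ x = 2 * m + 1 by omega) with h | h | rfl
  · rw [Nat.mod_eq_of_lt (by omega)]; split_ifs <;> omega
  · rw [Nat.mod_eq_sub_mod (by omega), Nat.mod_eq_of_lt (by omega)]; split_ifs <;> omega
  · rw [Nat.mul_mod_left]; split_ifs <;> omega

lemma inversion_two_odd_iff {m i j : ℕ} (hi₁ : 1 ≤ i) (hi₂ : i ≤ 2 * m + 1)
    (hj₁ : 1 ≤ j) (hj₂ : j ≤ 2 * m + 1) :
    (i < j ∧ modRep 2 (2 * m + 1) j < modRep 2 (2 * m + 1) i) ↔ (i ≤ m ∧ m < j ∧ j ≤ m + i) := by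
  rw [modRep_two_odd hi₁ hi₂, modRep_two_odd hj₁ hj₂]
  split_ifs <;> omega

lemma card_inversions_from_two_odd (m i : ℕ) :
    #{j ∈ Icc 1 (2 * m + 1) | i ≤ m ∧ m < j ∧ j ≤ m + i} = if i ≤ m then i else 0 := by
  split_ifs with hi
  · have : {j ∈ Icc 1 (2 * m + 1) | i ≤ m ∧ m < j ∧ j ≤ m + i} = Ioc m (m + i) := by
      ext j
      simp only [mem_filter, mem_Icc, mem_Ioc]
      omega
    rw [this, Nat.card_Ioc, Nat.add_sub_cancel_left]
  · rw [card_eq_zero, filter_eq_empty_iff]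
    omega

lemma invNum_two_odd (m : ℕ) : invNum 2 (2 * m + 1) = ∑ i ∈ Icc 1 m, i := by
  have fibers : invNum 2 (2 * m + 1) = ∑ i ∈ Icc 1 (2 * m + 1),
      #{j ∈ Icc 1 (2 * m + 1) | i ≤ m ∧ m < j ∧ j ≤ m + i} := by
    rw [invNum, card_filter, sum_product]
    refine sum_congr rfl fun i hi => ?_
    rw [card_filter]
    refine sum_congr rfl fun j hj => ?_
    simp only [mem_Icc] at hi hj
    simp only [inversion_two_odd_iff hi.1 hi.2 hj.1 hj.2]
  simp only [fibers, card_inversions_from_two_odd, ← sum_filter]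
  congr 1
  ext i
  simp only [mem_filter, mem_Icc]
  omega

lemma sum_Icc_one_id_mul_two (m : ℕ) : (∑ i ∈ Icc 1 m, i) * 2 = m * (m + 1) := by
  induction m with
  | zero => rfl
  | succ n ih => rw [sum_Icc_succ_top (by omega), add_mul, ih]; ring

theorem stmt8_general (b : ℕ) (hodd : Odd b) :
    (invNum 2 b : ℚ) = ((b : ℚ) ^ 2 - 1) / 8 := by
  obtain ⟨m, rfl⟩ := hodd
  have gauss : (invNum 2 (2 * m + 1) : ℚ) * 2 = m * (m + 1) := by
    rw [invNum_two_odd]; exact_mod_cast sum_Icc_one_id_mul_two m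
  push_cast at gauss ⊢
  linear_combination gauss / 2

theorem stmt8 (b : ℕ) (hb : 3 ≤ b) (hodd : Odd b) :
    (invNum 2 b : ℚ) = ((b : ℚ) ^ 2 - 1) / 8 :=
  stmt8_general b hodd
end

section
/- For an odd integer b ≥ 3, inv(b-2, b) = (3b² - 12b + 9)/8. -/
/-!
Write `b = 2 m + 1`. Multiplication by `b - 2 ≡ -2` sends `1, …, m` to the odd values
`b - 2, b - 4, …, 1`, sends `m + 1, …, 2 m` to the even values `2 m, …, 2`, and fixes `b`.
Each block is decreasing, so contributes `m (m - 1) / 2` inversions, and a pair `i ≤ m < j` is an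
inversion exactly when `j > m + i`, which gives `m (m - 1) / 2` more. Hence
`inv(b - 2, b) = 3 m (m - 1) / 2 = 3 (b - 1) (b - 3) / 8`.
-/

open Finset

def invCount (f : ℕ → ℕ) (n : ℕ) : ℕ :=
  #{p ∈ Icc 1 n ×ˢ Icc 1 n | p.1 < p.2 ∧ f p.2 < f p.1}

lemma invNum_eq_invCount (a b : ℕ) : invNum a b = invCount (modRep a b) b := rfl

lemma invCount_congr {f g : ℕ → ℕ} {n : ℕ} (h : ∀ x ∈ Icc 1 n, f x = g x) :
    invCount f n = invCount g n := by
  unfold invCount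
  refine congrArg card (filter_congr fun p hp => ?_)
  rw [mem_product] at hp
  rw [h _ hp.1, h _ hp.2]

lemma invCount_eq_sum (f : ℕ → ℕ) (n : ℕ) :
    invCount f n = ∑ i ∈ Icc 1 n, #{j ∈ Icc 1 n | i < j ∧ f j < f i} := by
  simp only [invCount, card_filter, sum_product]

lemma modRep_of_mul_eq {a b x q r : ℕ} (h : a * x = b * q + r) (hr₀ : 0 < r) (hrb : r < b) :
    modRep a b x = r := by
  have hmod : a * x % b = r := by rw [h, Nat.mul_add_mod, Nat.mod_eq_of_lt hrb]
  rw [modRep, hmod, if_neg hr₀.ne']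

/-- The representative of `-2 x` modulo `2 m + 1` in `{1, …, 2 m + 1}`. -/
def negTwoMulRep (m x : ℕ) : ℕ :=
  if x ≤ m then 2 * m + 1 - 2 * x else if x ≤ 2 * m then 2 * (2 * m + 1) - 2 * x else 2 * m + 1

lemma modRep_two_mul_sub_one {m x : ℕ} (hx₁ : 1 ≤ x) (hx₂ : x ≤ 2 * m + 1) :
    modRep (2 * m - 1) (2 * m + 1) x = negTwoMulRep m x := by
  unfold negTwoMulRep
  split_ifs with h₁ h₂
  · refine modRep_of_mul_eq (q := x - 1) ?_ (by omega) (by omega)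
    zify [hx₁, show 1 ≤ 2 * m by omega, show 2 * x ≤ 2 * m + 1 by omega]
    ring
  · refine modRep_of_mul_eq (q := x - 2) ?_ (by omega) (by omega)
    zify [show 2 ≤ x by omega, show 1 ≤ 2 * m by omega, show 2 * x ≤ 2 * (2 * m + 1) by omega]
    ring
  · obtain rfl : x = 2 * m + 1 := by omega
    rw [modRep, Nat.mul_mod_left, if_pos rfl]

lemma card_inversions_negTwoMulRep (m i : ℕ) :
    #{j ∈ Icc 1 (2 * m + 1) | i < j ∧ negTwoMulRep m j < negTwoMulRep m i} =
      if i ≤ m then 2 * (m - i) else 2 * m - i := by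
  split_ifs with hi
  · have hset : ({j ∈ Icc 1 (2 * m + 1) | i < j ∧ negTwoMulRep m j < negTwoMulRep m i} :
        Finset ℕ) = Ioc i m ∪ Ioc (m + i) (2 * m) := by
      ext j
      rw [mem_filter]
      simp only [mem_Icc, mem_union, mem_Ioc, negTwoMulRep]
      split_ifs <;> omega
    rw [hset, card_union_of_disjoint (disjoint_left.2 fun j hj hj' => by
      rw [mem_Ioc] at hj hj'; omega), Nat.card_Ioc, Nat.card_Ioc]
    omega
  · have hset : ({j ∈ Icc 1 (2 * m + 1) | i < j ∧ negTwoMulRep m j < negTwoMulRep m i} :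
        Finset ℕ) = Ioc i (2 * m) := by
      ext j
      rw [mem_filter]
      simp only [mem_Icc, mem_Ioc, negTwoMulRep]
      split_ifs <;> omega
    rw [hset, Nat.card_Ioc]

lemma sum_Ioc_tsub (k n : ℕ) : ∑ i ∈ Ioc k n, (n - i) = ∑ i ∈ range (n - k), i := by
  rw [← Ico_add_one_add_one_eq_Ioc, sum_Ico_reflect (fun i => i) _ le_rfl, Nat.sub_self,
    ← range_eq_Ico, Nat.add_sub_add_right]

lemma two_mul_invCount_negTwoMulRep (m : ℕ) :
    2 * invCount (negTwoMulRep m) (2 * m + 1) = 3 * (m * (m - 1)) := by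
  have hsplit : ∑ i ∈ Ioc 0 (2 * m + 1), (if i ≤ m then 2 * (m - i) else 2 * m - i) =
      2 * ∑ i ∈ Ioc 0 m, (m - i) + ∑ i ∈ Ioc m (2 * m), (2 * m - i) := by
    rw [← sum_Ioc_consecutive _ (Nat.zero_le m) (by omega : m ≤ 2 * m + 1),
      sum_Ioc_succ_top (by omega : m ≤ 2 * m), mul_sum,
      sum_congr rfl fun i hi => if_pos (mem_Ioc.1 hi).2,
      sum_congr rfl fun i hi => if_neg (by rw [mem_Ioc] at hi; omega), if_neg (by omega),
      Nat.sub_eq_zero_of_le (Nat.le_succ _), add_zero]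
  rw [invCount_eq_sum, sum_congr rfl fun i _ => card_inversions_negTwoMulRep m i,
    show Icc 1 (2 * m + 1) = Ioc 0 (2 * m + 1) from Icc_add_one_left_eq_Ioc 0 _, hsplit,
    sum_Ioc_tsub, sum_Ioc_tsub, show 2 * m - m = m by omega, Nat.sub_zero]
  have := sum_range_id_mul_two m
  omega

theorem stmt9_general (b : ℕ) (hodd : Odd b) :
    (invNum (b - 2) b : ℚ) = (3 * (b : ℚ) ^ 2 - 12 * b + 9) / 8 := by
  obtain ⟨m, rfl⟩ := hodd
  have hcount : 2 * invNum (2 * m + 1 - 2) (2 * m + 1) = 3 * (m * m - m) := by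
    rw [show 2 * m + 1 - 2 = 2 * m - 1 by omega, invNum_eq_invCount,
      invCount_congr fun x hx => modRep_two_mul_sub_one (mem_Icc.1 hx).1 (mem_Icc.1 hx).2,
      ← Nat.mul_sub_one]
    exact two_mul_invCount_negTwoMulRep m
  have hq := congrArg (Nat.cast : ℕ → ℚ) hcount
  push_cast [Nat.cast_sub (Nat.le_mul_self m)] at hq
  push_cast
  linear_combination hq / 2

theorem stmt9 (b : ℕ) (hb : 3 ≤ b) (hodd : Odd b) :
    (invNum (b - 2) b : ℚ) = (3 * (b : ℚ) ^ 2 - 12 * b + 9) / 8 :=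
  stmt9_general b hodd
end

section
/- If b ≡ 2 (mod 4), then f_b(-1) = φ(b), where f_b(x) = ∑_{gcd(a,b)=1, 1 ≤ a ≤ b} x^{inv(a,b)} and φ is Euler's totient function. -/
/-! Transported to `{1, …, b}` through `x ↦ x mod b`, multiplication by a unit `a` of `ZMod b`
becomes `x ↦ modRep a b x`, whose inversions are counted by `invNum a b`; hence
`(-1) ^ inv(a, b)` is the sign of multiplication by `a` on `ZMod b`. For `b = 2m` with `m` odd,
the Chinese remainder theorem splits `ZMod b` as `ZMod 2 × ZMod m`. A unit acts trivially on
`ZMod 2`, so multiplication by it is two copies of one permutation of `ZMod m`, of sign `+1`.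
Every term of `f_b(-1)` is therefore `1`. -/

open Finset Equiv

namespace Equiv.Perm

variable {α : Type*} [LinearOrder α] [Fintype α]

def inversions (σ : Perm α) : Finset (α × α) := {p | p.1 < p.2 ∧ σ p.2 < σ p.1}

theorem sign_eq_neg_one_pow_card_inversions_fin {n : ℕ} (σ : Perm (Fin n)) :
    sign σ = (-1) ^ #σ.inversions := by
  have hpair : ∀ p : Fin n × Fin n,
      (if p.1 < p.2 then (if σ p.1 < σ p.2 then 1 else -1) else 1 : ℤˣ) =
        if p ∈ σ.inversions then -1 else 1 := by
    rintro ⟨i, j⟩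
    simp only [inversions, mem_filter, mem_univ, true_and]
    by_cases hij : i < j
    · have hne : σ i ≠ σ j := σ.injective.ne hij.ne
      by_cases h : σ i < σ j
      · simp [hij, h, h.not_gt]
      · simp [hij, h, lt_of_le_of_ne (not_lt.mp h) hne.symm]
    · simp [hij]
  rw [sign_eq_prod_prod_Ioi]
  simp_rw [← filter_lt_eq_Ioi, prod_filter]
  rw [← Fintype.prod_prod_type'
    (f := fun i j => if i < j then (if σ i < σ j then (1 : ℤˣ) else -1) else 1)]
  simp_rw [hpair, Fintype.prod_ite_mem, prod_const]

theorem card_inversions_permCongr {β : Type*} [LinearOrder β] [Fintype β] (e : α ≃o β)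
    (σ : Perm α) : #(e.toEquiv.permCongr σ).inversions = #σ.inversions := by
  symm
  refine card_equiv (e.toEquiv.prodCongr e.toEquiv) fun p => ?_
  simp [inversions]

theorem sign_eq_neg_one_pow_card_inversions (σ : Perm α) :
    sign σ = (-1) ^ #σ.inversions := by
  let e := (Fintype.orderIsoFinOfCardEq α rfl).symm
  rw [← card_inversions_permCongr e, ← sign_eq_neg_one_pow_card_inversions_fin, sign_permCongr]

end Equiv.Perm

theorem modRep_mem_Icc (a x : ℕ) {b : ℕ} (hb : 0 < b) : modRep a b x ∈ Icc 1 b := by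
  have := Nat.mod_lt (a * x) hb
  unfold modRep
  split <;> simp only [mem_Icc] <;> omega

theorem natCast_modRep (a b x : ℕ) : (modRep a b x : ZMod b) = a * x := by
  unfold modRep
  split_ifs with h
  · rw [ZMod.natCast_self, ← Nat.cast_mul, eq_comm, ZMod.natCast_eq_zero_iff]
    exact Nat.dvd_of_mod_eq_zero h
  · rw [ZMod.natCast_mod, Nat.cast_mul]

section

variable (b : ℕ) [NeZero b]

theorem ZMod.natCast_injOn_Icc : Set.InjOn (fun x : ℕ => (x : ZMod b)) (Icc 1 b) := by
  intro x hx y hy hxy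
  simp only [coe_Icc, Set.mem_Icc] at hx hy
  rw [ZMod.natCast_eq_natCast_iff'] at hxy
  rcases hx.2.lt_or_eq with hx' | rfl <;> rcases hy.2.lt_or_eq with hy' | rfl
  · rwa [Nat.mod_eq_of_lt hx', Nat.mod_eq_of_lt hy'] at hxy
  · rw [Nat.mod_eq_of_lt hx', Nat.mod_self] at hxy; omega
  · rw [Nat.mod_eq_of_lt hy', Nat.mod_self] at hxy; omega
  · rfl

noncomputable def iccEquivZMod : Icc 1 b ≃ ZMod b :=
  Equiv.ofBijective (fun x => (x : ZMod b)) <| by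
    refine (Fintype.bijective_iff_injective_and_card _).mpr ⟨?_, by simp⟩
    exact fun x y h => Subtype.ext (ZMod.natCast_injOn_Icc b x.2 y.2 h)

variable {a : ℕ} {b} (h : a.Coprime b)

noncomputable def modRepPerm : Perm (Icc 1 b) :=
  (iccEquivZMod b).symm.permCongr (ZMod.unitOfCoprime a h).mulLeft

theorem coe_modRepPerm_apply (x : Icc 1 b) : (modRepPerm h x : ℕ) = modRep a b x := by
  have hx : modRep a b x ∈ Icc 1 b := modRep_mem_Icc a x (Nat.pos_of_neZero b)
  suffices iccEquivZMod b (modRepPerm h x) = iccEquivZMod b ⟨_, hx⟩ by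
    simpa using congrArg Subtype.val ((iccEquivZMod b).injective this)
  simp [modRepPerm, Equiv.permCongr_apply, iccEquivZMod, natCast_modRep]

theorem invNum_eq_card_inversions : invNum a b = #(modRepPerm h).inversions := by
  symm
  have hmem : ∀ p : Icc 1 b × Icc 1 b, p ∈ (modRepPerm h).inversions ↔
      p.1 < p.2 ∧ modRep a b p.2 < modRep a b p.1 := fun p => by
    simp only [Perm.inversions, mem_filter, mem_univ, true_and, ← Subtype.coe_lt_coe,
      coe_modRepPerm_apply]
  unfold invNum
  refine card_nbij (fun p => (p.1.1, p.2.1)) ?_ ?_ ?_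
  · rintro ⟨x, y⟩ hxy
    simp only [mem_coe, mem_filter, mem_product] at hxy ⊢
    exact ⟨⟨x.2, y.2⟩, (hmem _).mp hxy⟩
  · rintro ⟨x, y⟩ - ⟨x', y'⟩ - h
    simp only [Prod.mk.injEq] at h
    rw [Subtype.ext h.1, Subtype.ext h.2]
  · rintro ⟨x, y⟩ hxy
    simp only [mem_coe, mem_filter, mem_product] at hxy
    exact ⟨(⟨x, hxy.1.1⟩, ⟨y, hxy.1.2⟩), (hmem _).mpr hxy.2, rfl⟩

theorem neg_one_pow_invNum :
    (-1 : ℤˣ) ^ invNum a b = Perm.sign (ZMod.unitOfCoprime a h).mulLeft := by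
  rw [invNum_eq_card_inversions h, ← Perm.sign_eq_neg_one_pow_card_inversions, modRepPerm,
    Perm.sign_permCongr]

end

theorem ZMod.sign_mulLeft_of_mod_four_eq_two {n : ℕ} [NeZero n] (hn : n % 4 = 2) (u : (ZMod n)ˣ) :
    Perm.sign u.mulLeft = 1 := by
  obtain ⟨m, rfl⟩ : ∃ m, n = 2 * m := ⟨n / 2, by omega⟩
  have : NeZero m := ⟨by omega⟩
  let crt := ZMod.chineseRemainder (Nat.coprime_two_left.mpr (Nat.odd_iff.mpr (by omega)) :
    Nat.Coprime 2 m)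
  have hcrt : ∀ x, crt x = (cast x, cast x) := fun x =>
    Prod.ext (Prod.fst_zmod_cast x) (Prod.snd_zmod_cast x)
  have hu : crt u = (1, (unitsMap (dvd_mul_left m 2) u : ZMod m)) := by
    rw [hcrt, unitsMap_val, ← unitsMap_val (dvd_mul_right 2 m), Subsingleton.elim (unitsMap _ u) 1]
    rfl
  have hconj : crt.toEquiv.permCongr u.mulLeft =
      prodCongrRight fun _ => (unitsMap (dvd_mul_left m 2) u).mulLeft := by
    ext z <;> simp [permCongr_apply, hu]
  rw [← Perm.sign_permCongr crt.toEquiv, hconj, Perm.sign_prodCongrRight, prod_const,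
    Int.units_pow_eq_pow_mod_two]
  simp

theorem card_filter_coprime_Icc_eq_totient (n : ℕ) :
    #{a ∈ Icc 1 n | a.Coprime n} = n.totient := by
  rw [← Nat.filter_coprime_Ico_eq_totient n 1, add_comm, Ico_add_one_right_eq_Icc]
  simp_rw [Nat.coprime_comm]

theorem stmt14 (b : ℕ) (hb : b % 4 = 2) :
    ∑ a ∈ (Finset.Icc 1 b).filter (fun a => Nat.Coprime a b),
      ((-1 : ℤ)) ^ invNum a b = (Nat.totient b : ℤ) := by
  have : NeZero b := ⟨by omega⟩
  have hterm : ∀ a ∈ (Icc 1 b).filter (fun a => Nat.Coprime a b), (-1 : ℤ) ^ invNum a b = 1 := by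
    intro a ha
    have h := congrArg Units.val ((neg_one_pow_invNum (mem_filter.mp ha).2).trans
      (ZMod.sign_mulLeft_of_mod_four_eq_two hb _))
    simpa using h
  rw [sum_congr rfl hterm, sum_const, card_filter_coprime_Icc_eq_totient, nsmul_one]
end
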